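/- arXiv:1410.7977 — 3 statements merged into one kernel-verified Lean document; each statement's English description precedes it below -/
import Mathlib

section
/- (Yano's inequality) For every n ≥ 1, the L¹ norm of the n-th Walsh-Fejér kernel satisfies ∫_G |K_n^w| dμ ≤ 2. -/
open MeasureTheory Filter Finset
open scoped ENNReal NNReal

/-- The Walsh group `G = ∏ ℤ₂`. -/
abbrev WG := ℕ → ZMod 2

noncomputable section

/-- The `k`-th Rademacher function `r_k(x) = (-1)^{x_k}`. -/
def rad (k : ℕ) (x : WG) : ℝ := (-1 : ℝ) ^ (x k).val

/-- The Walsh-Paley function `w_n(x) = (-1)^{∑ n_k x_k}`. -/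
def walsh (n : ℕ) (x : WG) : ℝ :=
  (-1 : ℝ) ^ (∑ k ∈ Finset.range (n + 1), if n.testBit k then (x k).val else 0)

/-- The Walsh-Kaczmarz function
`κ_n(x) = r_{|n|}(x)·(-1)^{∑_{k<|n|} n_k x_{|n|-1-k}}`, `κ_0 = 1`,
where `|n| = Nat.log 2 n` is the position of the leading binary digit. -/
def kacz (n : ℕ) (x : WG) : ℝ :=
  if n = 0 then 1 else
    rad (Nat.log 2 n) x *
      (-1 : ℝ) ^ (∑ k ∈ Finset.range (Nat.log 2 n),
        if n.testBit k then (x (Nat.log 2 n - 1 - k)).val else 0)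

/-- Walsh-Paley Dirichlet kernel. -/
def Dw (n : ℕ) (x : WG) : ℝ := ∑ k ∈ Finset.range n, walsh k x

/-- Walsh-Kaczmarz Dirichlet kernel. -/
def Dk (n : ℕ) (x : WG) : ℝ := ∑ k ∈ Finset.range n, kacz k x

/-- Walsh-Fejér kernel `K_n = (1/n) ∑_{k=1}^n D_k`. -/
def Kw (n : ℕ) (x : WG) : ℝ := (1 / n : ℝ) * ∑ k ∈ Finset.Icc 1 n, Dw k x

/-- The transformation reversing the first `A` coordinates. -/
def tau (A : ℕ) (x : WG) : WG := fun k => if k < A then x (A - 1 - k) else x k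

/-- The dyadic interval (cylinder) `I_n(x)`. -/
def cyl (n : ℕ) (x : WG) : Set WG := {y | ∀ k < n, y k = x k}

/-- `I_n = I_n(0)`. -/
def In (n : ℕ) : Set WG := cyl n 0

/-- A measure `μ` on `WG` is the Haar (product) measure iff every cylinder of
level `n` has measure `2⁻ⁿ`. -/
def IsHaar (μ : Measure WG) : Prop :=
  ∀ (n : ℕ) (x : WG), μ (cyl n x) = (2 : ℝ≥0∞)⁻¹ ^ n

/-- Walsh-Fourier coefficient. -/
def fhatW (μ : Measure WG) (f : WG → ℝ) (j : ℕ) : ℝ := ∫ x, f x * walsh j x ∂μ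

/-- Walsh-Fourier partial sum `S_N f`. -/
def partialW (μ : Measure WG) (N : ℕ) (f : WG → ℝ) (x : WG) : ℝ :=
  ∑ j ∈ Finset.range N, fhatW μ f j * walsh j x

/-- Walsh-Kaczmarz-Fourier coefficient. -/
def fhatK (μ : Measure WG) (f : WG → ℝ) (j : ℕ) : ℝ := ∫ x, f x * kacz j x ∂μ

/-- Walsh-Kaczmarz-Fourier partial sum `S_N^κ f`. -/
def partialK (μ : Measure WG) (N : ℕ) (f : WG → ℝ) (x : WG) : ℝ :=
  ∑ j ∈ Finset.range N, fhatK μ f j * kacz j x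

/-- Walsh-Kaczmarz-Fejér mean `σ_n^κ f`. -/
def sigmaK (μ : Measure WG) (n : ℕ) (f : WG → ℝ) (x : WG) : ℝ :=
  (1 / n : ℝ) * ∑ j ∈ Finset.Icc 1 n, partialK μ j f x

end

/-!
Write `T_n = ∑_{k=1}^n D_k = n K_n`. Splitting off the leading binary digit, `n = 2^m + q` with
`q < 2^m`, the identity `D_{2^m+k} = D_{2^m} + r_m D_k` gives
`T_n = T_{2^m} + q D_{2^m} + r_m T_q`. Both `D_{2^m}` and `T_{2^m}` are nonnegative, every `D_k`
with `k ≥ 1` has integral `1`, and `|r_m| = 1`, so `‖T_n‖₁ ≤ 2^m + q + ‖T_q‖₁`.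
Since `q ≤ 2^m`, induction on `n` gives `‖T_n‖₁ ≤ 2n`.
-/

noncomputable section

def trunc (N : ℕ) (x : WG) : Fin N → ZMod 2 := fun k => x k

lemma walsh_eq_comp_trunc (j : ℕ) :
    walsh j = (fun v : Fin (j + 1) → ZMod 2 =>
      (-1 : ℝ) ^ (∑ k : Fin (j + 1), if j.testBit k then (v k).val else 0)) ∘
        trunc (j + 1) := by
  ext x
  rw [walsh, ← Fin.sum_univ_eq_sum_range (fun k => if j.testBit k then (x k).val else 0)]
  rfl

lemma walsh_zero (x : WG) : walsh 0 x = 1 := by simp [walsh]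

lemma sum_neg_one_pow_sum_eq_zero {N : ℕ} (s : Fin N → Bool) (hs : ∃ k, s k) :
    ∑ v : Fin N → ZMod 2, (-1 : ℝ) ^ (∑ k, if s k then (v k).val else 0) = 0 := by
  obtain ⟨k₀, hk₀⟩ := hs
  simp_rw [← Finset.prod_pow_eq_pow_sum]
  rw [← Fintype.prod_sum fun k (b : ZMod 2) => (-1 : ℝ) ^ (if s k then b.val else 0)]
  refine Finset.prod_eq_zero (Finset.mem_univ k₀) ?_
  simp only [hk₀, if_true]
  exact Fin.sum_univ_two (fun b : Fin 2 => (-1 : ℝ) ^ b.val) |>.trans (by norm_num)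

lemma Nat.testBit_two_pow_add {m k : ℕ} (hk : k < 2 ^ m) (i : ℕ) :
    (2 ^ m + k).testBit i = (decide (i = m) || k.testBit i) := by
  rcases lt_trichotomy i m with h | rfl | h
  · simp [Nat.testBit_two_pow_add_gt h, h.ne]
  · simp [Nat.testBit_two_pow_add_eq, Nat.testBit_eq_false_of_lt hk]
  · have hk' : 2 ^ m + k < 2 ^ i :=
      (by rw [pow_succ] at *; omega : 2 ^ m + k < 2 ^ (m + 1)).trans_le
        (Nat.pow_le_pow_right two_pos h)
    simp [Nat.testBit_eq_false_of_lt hk', Nat.testBit_eq_false_of_lt (hk'.trans_le' le_add_self),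
      h.ne']

lemma walsh_eq_of_lt {n N : ℕ} (h : n < N) (x : WG) :
    walsh n x = (-1 : ℝ) ^ (∑ k ∈ range N, if n.testBit k then (x k).val else 0) := by
  rw [walsh]
  congr 1
  refine Finset.sum_subset (Finset.range_subset_range.mpr h) fun k _ hk => ?_
  have : n < 2 ^ k := Nat.lt_two_pow_self.trans_le
    (Nat.pow_le_pow_right two_pos (by simp at hk; omega))
  simp [Nat.testBit_eq_false_of_lt this]

lemma walsh_two_pow_add {m k : ℕ} (hk : k < 2 ^ m) (x : WG) :
    walsh (2 ^ m + k) x = rad m x * walsh k x := by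
  have hm : m < 2 ^ m + k + 1 := by have := m.lt_two_pow_self; omega
  rw [walsh_eq_of_lt (lt_add_one _), walsh_eq_of_lt (by omega : k < 2 ^ m + k + 1), rad,
    ← pow_add]
  congr 1
  have hsplit : ∀ i, (if (2 ^ m + k).testBit i then (x i).val else 0)
      = (if m = i then (x i).val else 0) + (if k.testBit i then (x i).val else 0) := by
    intro i
    by_cases hi : i = m
    · subst hi; simp [Nat.testBit_eq_false_of_lt hk, Nat.testBit_two_pow_add hk]
    · simp [Nat.testBit_two_pow_add hk, hi, Ne.symm hi]
  simp_rw [hsplit, Finset.sum_add_distrib, Finset.sum_ite_eq, Finset.mem_range, if_pos hm]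

lemma Dw_two_pow_add {m k : ℕ} (hk : k ≤ 2 ^ m) (x : WG) :
    Dw (2 ^ m + k) x = Dw (2 ^ m) x + rad m x * Dw k x := by
  rw [Dw, Finset.sum_range_add, Dw, Dw, Finset.mul_sum]
  congr 1
  exact Finset.sum_congr rfl fun i hi => walsh_two_pow_add ((Finset.mem_range.mp hi).trans_le hk) x

lemma rad_eq_one_or_neg_one (m : ℕ) (x : WG) : rad m x = 1 ∨ rad m x = -1 :=
  neg_one_pow_eq_or ℝ _

lemma abs_rad (m : ℕ) (x : WG) : |rad m x| = 1 := by
  rcases rad_eq_one_or_neg_one m x with h | h <;> simp [h]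

lemma one_add_rad_nonneg (m : ℕ) (x : WG) : 0 ≤ 1 + rad m x := by
  rcases rad_eq_one_or_neg_one m x with h | h <;> simp [h]

lemma Dw_one (x : WG) : Dw 1 x = 1 := by simp [Dw, walsh_zero]

lemma Dw_two_pow_nonneg (m : ℕ) (x : WG) : 0 ≤ Dw (2 ^ m) x := by
  induction m with
  | zero => simp [Dw_one]
  | succ m ih =>
    rw [pow_succ, mul_two, Dw_two_pow_add le_rfl, ← one_add_mul]
    exact mul_nonneg (one_add_rad_nonneg m x) ih

def fejerSum (n : ℕ) (x : WG) : ℝ := ∑ k ∈ range n, Dw (k + 1) x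

lemma Kw_eq_mul_fejerSum (n : ℕ) (x : WG) : Kw n x = (1 / n : ℝ) * fejerSum n x := by
  rw [Kw, fejerSum, Finset.range_eq_Ico, Finset.sum_Ico_add' (fun k => Dw k x), zero_add,
    Finset.Ico_add_one_right_eq_Icc]

lemma fejerSum_two_pow_add {m q : ℕ} (hq : q ≤ 2 ^ m) (x : WG) :
    fejerSum (2 ^ m + q) x = fejerSum (2 ^ m) x + q * Dw (2 ^ m) x + rad m x * fejerSum q x := by
  have hshift : ∀ i ∈ range q, Dw (2 ^ m + i + 1) x = Dw (2 ^ m) x + rad m x * Dw (i + 1) x :=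
    fun i hi => by rw [add_assoc, Dw_two_pow_add (by simp at hi; omega)]
  rw [fejerSum, Finset.sum_range_add, Finset.sum_congr rfl hshift, Finset.sum_add_distrib,
    Finset.sum_const, Finset.card_range, nsmul_eq_mul, ← Finset.mul_sum, fejerSum, fejerSum,
    add_assoc]

lemma fejerSum_two_pow_nonneg (m : ℕ) (x : WG) : 0 ≤ fejerSum (2 ^ m) x := by
  induction m with
  | zero => simp [fejerSum, Dw_one]
  | succ m ih =>
    rw [pow_succ, mul_two, fejerSum_two_pow_add le_rfl]
    have := one_add_rad_nonneg m x
    have := Dw_two_pow_nonneg m x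
    nlinarith

lemma measurable_trunc (N : ℕ) : Measurable (trunc N) :=
  measurable_pi_lambda _ fun k => measurable_pi_apply (k : ℕ)

namespace IsHaar

variable {μ : Measure WG}

lemma isProbabilityMeasure (hμ : IsHaar μ) : IsProbabilityMeasure μ :=
  ⟨by simpa [cyl] using hμ 0 0⟩

lemma measure_trunc_preimage (hμ : IsHaar μ) {N : ℕ} (v : Fin N → ZMod 2) :
    μ (trunc N ⁻¹' {v}) = 2⁻¹ ^ N := by
  convert hμ N (fun k => if h : k < N then v ⟨k, h⟩ else 0) using 2
  ext x
  simp +contextual [trunc, cyl, funext_iff, Fin.forall_iff]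

lemma integrable_comp_trunc (hμ : IsHaar μ) {N : ℕ} (g : (Fin N → ZMod 2) → ℝ) :
    Integrable (g ∘ trunc N) μ :=
  have := hμ.isProbabilityMeasure
  (Integrable.of_finite (μ := μ.map (trunc N))).comp_measurable (measurable_trunc N)

lemma integral_comp_trunc (hμ : IsHaar μ) {N : ℕ} (g : (Fin N → ZMod 2) → ℝ) :
    ∫ x, (g ∘ trunc N) x ∂μ = (2 ^ N)⁻¹ * ∑ v, g v := by
  have := hμ.isProbabilityMeasure
  rw [Function.comp_def, ← integral_map (measurable_trunc N).aemeasurable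
    StronglyMeasurable.of_discrete.aestronglyMeasurable, integral_fintype Integrable.of_finite,
    Finset.mul_sum]
  refine Finset.sum_congr rfl fun v _ => ?_
  rw [measureReal_def, Measure.map_apply (measurable_trunc N) (measurableSet_singleton v),
    hμ.measure_trunc_preimage]
  simp

lemma integrable_walsh (hμ : IsHaar μ) (j : ℕ) : Integrable (walsh j) μ := by
  rw [walsh_eq_comp_trunc j]
  exact hμ.integrable_comp_trunc _

lemma integral_walsh (hμ : IsHaar μ) {j : ℕ} (hj : j ≠ 0) : ∫ x, walsh j x ∂μ = 0 := by
  rw [walsh_eq_comp_trunc j, hμ.integral_comp_trunc, sum_neg_one_pow_sum_eq_zero _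
    ⟨⟨j.log2, Nat.lt_succ_of_le j.log2_le_self⟩, Nat.testBit_log2 hj⟩, mul_zero]

lemma integrable_Dw (hμ : IsHaar μ) (n : ℕ) : Integrable (Dw n) μ := by
  unfold Dw
  exact integrable_finsetSum _ fun k _ => hμ.integrable_walsh k

lemma integral_Dw (hμ : IsHaar μ) {n : ℕ} (hn : n ≠ 0) : ∫ x, Dw n x ∂μ = 1 := by
  have := hμ.isProbabilityMeasure
  simp only [Dw]
  rw [integral_finsetSum _ fun k _ => hμ.integrable_walsh k, Finset.sum_eq_single_of_mem 0
    (by simpa [Nat.pos_iff_ne_zero]) fun k _ hk => hμ.integral_walsh hk]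
  simp [walsh_zero]

lemma integrable_fejerSum (hμ : IsHaar μ) (n : ℕ) : Integrable (fejerSum n) μ := by
  unfold fejerSum
  exact integrable_finsetSum _ fun k _ => hμ.integrable_Dw (k + 1)

lemma integral_fejerSum (hμ : IsHaar μ) (n : ℕ) : ∫ x, fejerSum n x ∂μ = n := by
  simp only [fejerSum]
  rw [integral_finsetSum _ fun k _ => hμ.integrable_Dw (k + 1)]
  simp [hμ.integral_Dw]

lemma integral_abs_fejerSum_two_pow_add_le (hμ : IsHaar μ) {m q : ℕ} (hq : q ≤ 2 ^ m) :
    ∫ x, |fejerSum (2 ^ m + q) x| ∂μ ≤ 2 ^ m + q + ∫ x, |fejerSum q x| ∂μ := by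
  have hpoint : ∀ x, |fejerSum (2 ^ m + q) x|
      ≤ fejerSum (2 ^ m) x + q * Dw (2 ^ m) x + |fejerSum q x| := fun x => by
    have := fejerSum_two_pow_nonneg m x
    have := Dw_two_pow_nonneg m x
    rw [fejerSum_two_pow_add hq]
    refine (abs_add_le _ _).trans ?_
    rw [abs_mul, abs_rad, one_mul, abs_of_nonneg (by positivity)]
  have hA : Integrable (fun x => fejerSum (2 ^ m) x) μ := hμ.integrable_fejerSum (2 ^ m)
  have hB : Integrable (fun x => q * Dw (2 ^ m) x) μ := (hμ.integrable_Dw (2 ^ m)).const_mul _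
  have hAB : Integrable (fun x => fejerSum (2 ^ m) x + q * Dw (2 ^ m) x) μ := hA.add hB
  have hC : Integrable (fun x => |fejerSum q x|) μ := (hμ.integrable_fejerSum q).abs
  refine (integral_mono (hμ.integrable_fejerSum _).abs (hAB.add hC) hpoint).trans_eq ?_
  simp only [Pi.add_apply]
  rw [integral_add hAB hC, integral_add hA hB, integral_const_mul, hμ.integral_fejerSum,
    hμ.integral_Dw (by positivity)]
  push_cast
  ring

lemma integral_abs_fejerSum_le (hμ : IsHaar μ) (n : ℕ) :
    ∫ x, |fejerSum n x| ∂μ ≤ 2 * n := by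
  induction n using Nat.strong_induction_on with
  | _ n ih =>
  rcases Nat.eq_zero_or_pos n with rfl | hn
  · simp [fejerSum]
  obtain ⟨m, q, hq, rfl⟩ : ∃ m q, q < 2 ^ m ∧ n = 2 ^ m + q :=
    ⟨n.log2, n - 2 ^ n.log2, by have := n.lt_log2_self; rw [pow_succ] at this; omega,
      by have := Nat.log2_self_le hn.ne'; omega⟩
  have ih_q := ih q (by have := Nat.one_le_two_pow (n := m); omega)
  have hq_real : (q : ℝ) ≤ 2 ^ m := by exact_mod_cast hq.le
  calc ∫ x, |fejerSum (2 ^ m + q) x| ∂μ ≤ 2 ^ m + q + ∫ x, |fejerSum q x| ∂μ :=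
        hμ.integral_abs_fejerSum_two_pow_add_le hq.le
    _ ≤ 2 * ↑(2 ^ m + q) := by push_cast; linarith

end IsHaar

theorem yano_general (μ : Measure WG) (hμ : IsHaar μ) (n : ℕ) :
    ∫ x, |Kw n x| ∂μ ≤ 2 := by
  simp_rw [Kw_eq_mul_fejerSum, abs_mul, abs_of_nonneg (by positivity : (0 : ℝ) ≤ 1 / n)]
  rw [integral_const_mul]
  rcases Nat.eq_zero_or_pos n with rfl | hn
  · simp
  calc 1 / (n : ℝ) * ∫ x, |fejerSum n x| ∂μ ≤ 1 / n * (2 * n) := by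
        gcongr; exact hμ.integral_abs_fejerSum_le n
    _ = 2 := by field_simp

/-- Yano's inequality: `∫_G |K_n^w| dμ ≤ 2` for `n ≥ 1`. -/
theorem yano (μ : Measure WG) (hμ : IsHaar μ) (n : ℕ) (hn : 1 ≤ n) :
    ∫ x, |Kw n x| ∂μ ≤ 2 :=
  yano_general μ hμ n
end
end

section
/- (Watari) For f ∈ L_p(G) with 1 ≤ p < ∞ and n ∈ ℕ: ω_p(1/2^n, f)/2 ≤ ‖f − S_{2^n}f‖_p ≤ ω_p(1/2^n, f), where S_{2^n}f is the 2^n-th partial sum of the Walsh-Fourier series and ω_p is the dyadic modulus of continuity. -/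
open MeasureTheory Filter Finset
open scoped ENNReal NNReal

noncomputable section

/-- The dyadic modulus of continuity `ω_p(1/2^n, f) = sup_{h ∈ I_n} ‖f(·+h) − f‖_p`. -/
noncomputable def omegaLp (μ : Measure WG) (p : ℝ≥0∞) (f : WG → ℝ) (n : ℕ) : ℝ≥0∞ :=
  ⨆ h ∈ In n, eLpNorm (fun x => f (x + h) - f x) p μ

/-!
Since `D_{2^n} = 2^n 𝟙_{I_n}`, the partial sum `S_{2^n} f (x)` is the average of `f (x + h)` over
`h ∈ I_n`. Hence `S_{2^n} f` is invariant under translations by `I_n`, and the triangle inequality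
gives `‖f(· + h) - f‖_p ≤ 2 ‖f - S_{2^n} f‖_p` for `h ∈ I_n`. Conversely `f - S_{2^n} f` is the
average over `h ∈ I_n` of `f - f(· + h)`, so by Minkowski's integral inequality its `L^p` norm is
at most the average of the norms `‖f - f(· + h)‖_p ≤ ω_p(2^{-n}, f)`.
-/

lemma ENNReal.rpow_lintegral_le_lintegral_rpow {α : Type*} [MeasurableSpace α] {ν : Measure α}
    [IsProbabilityMeasure ν] {H : α → ℝ≥0∞} (hH : AEMeasurable H ν) {q : ℝ} (hq : 1 ≤ q) :
    (∫⁻ a, H a ∂ν) ^ q ≤ ∫⁻ a, H a ^ q ∂ν := by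
  rcases hq.eq_or_lt with rfl | hq
  · simp
  have hHolder := ENNReal.lintegral_mul_le_Lp_mul_Lq ν (Real.HolderConjugate.conjExponent hq)
    hH aemeasurable_const (g := 1)
  simp only [Pi.mul_apply, Pi.one_apply, mul_one, ENNReal.one_rpow, lintegral_const,
    measure_univ] at hHolder
  rwa [one_div, ENNReal.le_rpow_inv_iff (by positivity)] at hHolder

/-- Minkowski's integral inequality, for an average over a probability measure `ν`. -/
lemma MeasureTheory.eLpNorm_le_of_enorm_le_lintegral {α β E : Type*} [MeasurableSpace α]
    [MeasurableSpace β] [ENorm E] {μ : Measure α} [SFinite μ] {ν : Measure β}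
    [IsProbabilityMeasure ν] {p : ℝ≥0∞} (hp : 1 ≤ p) (hp' : p ≠ ∞) {g : α → E} {F : α → β → ℝ≥0∞}
    (hF : AEMeasurable (Function.uncurry F) (μ.prod ν)) (hg : ∀ x, ‖g x‖ₑ ≤ ∫⁻ b, F x b ∂ν)
    {C : ℝ≥0∞} (hC : ∀ᵐ b ∂ν, eLpNorm (F · b) p μ ≤ C) :
    eLpNorm g p μ ≤ C := by
  have hp0 : p ≠ 0 := (zero_lt_one.trans_le hp).ne'
  set q := p.toReal
  have hq : 1 ≤ q := by simpa using ENNReal.toReal_mono hp' hp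
  have hq0 : 0 < q := zero_lt_one.trans_le hq
  have hFq : AEMeasurable (Function.uncurry fun x b => F x b ^ q) (μ.prod ν) := hF.pow_const q
  simp only [eLpNorm_eq_lintegral_rpow_enorm_toReal hp0 hp', enorm_eq_self, one_div] at hC ⊢
  rw [ENNReal.rpow_inv_le_iff hq0]
  calc ∫⁻ x, ‖g x‖ₑ ^ q ∂μ
      ≤ ∫⁻ x, (∫⁻ b, F x b ∂ν) ^ q ∂μ := lintegral_mono fun x => by gcongr; exact hg x
    _ ≤ ∫⁻ x, ∫⁻ b, F x b ^ q ∂ν ∂μ := lintegral_mono_ae <| by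
        filter_upwards [hF.aestronglyMeasurable.prodMk_left] with x hx
        exact ENNReal.rpow_lintegral_le_lintegral_rpow hx.aemeasurable hq
    _ = ∫⁻ b, ∫⁻ x, F x b ^ q ∂μ ∂ν := lintegral_lintegral_swap hFq
    _ ≤ ∫⁻ _, C ^ q ∂ν := lintegral_mono_ae <| by
        filter_upwards [hC] with b hb
        rwa [← ENNReal.rpow_inv_le_iff hq0]
    _ = C ^ q := by rw [lintegral_const, measure_univ, mul_one]

namespace Walsh

open Finset

lemma cyl_zero (x : WG) : cyl 0 x = Set.univ := by
  ext y; simp [cyl]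

lemma mem_cyl_comm {n : ℕ} {x y : WG} : y ∈ cyl n x ↔ x ∈ cyl n y :=
  forall₂_congr fun _ _ => eq_comm

lemma measurableSet_cyl (n : ℕ) (x : WG) : MeasurableSet (cyl n x) := by
  simp only [cyl, Set.ofPred_forall]
  exact .iInter fun k => .iInter fun _ =>
    measurableSet_eq_fun (measurable_pi_apply k) measurable_const

lemma preimage_add_left_cyl (c x : WG) (n : ℕ) : (c + ·) ⁻¹' cyl n x = cyl n (x - c) := by
  ext y
  simp [cyl, eq_sub_iff_add_eq, add_comm]

lemma cyl_add_of_mem_In {n : ℕ} {h : WG} (hh : h ∈ In n) (x : WG) : cyl n (x + h) = cyl n x := by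
  ext y
  refine forall₂_congr fun k hk => ?_
  rw [Pi.add_apply, hh k hk, Pi.zero_apply, add_zero]

lemma add_mem_In_iff_mem_cyl {n : ℕ} {t x : WG} : t + x ∈ In n ↔ t ∈ cyl n x := by
  refine forall₂_congr fun k _ => ?_
  rw [Pi.add_apply, Pi.zero_apply, add_eq_zero_iff_eq_neg, ZMod.neg_eq_self_mod_two]

def cylinders : Set (Set WG) := {s | ∃ n x, s = cyl n x}

lemma isPiSystem_cylinders : IsPiSystem cylinders := by
  rintro _ ⟨n, x, rfl⟩ _ ⟨m, y, rfl⟩ ⟨z, hzx, hzy⟩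
  wlog hnm : n ≤ m generalizing n m x y
  · rw [Set.inter_comm]
    exact this m y n x hzy hzx (le_of_not_ge hnm)
  refine ⟨m, y, Set.inter_eq_right.2 fun w hw k hk => ?_⟩
  rw [hw k (hk.trans_le hnm), ← hzy k (hk.trans_le hnm), hzx k hk]

/-- A level-`m` cylinder is determined by the first `m` coordinates of any of its points, so a
union of level-`m` cylinders is a countable one. -/
lemma measurableSet_generateFrom_cylinders_of_saturated {A : Set WG} (m : ℕ)
    (hA : ∀ y ∈ A, cyl m y ⊆ A) : MeasurableSet[.generateFrom cylinders] A := by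
  let extend (v : Fin m → ZMod 2) : WG := fun j => if h : j < m then v ⟨j, h⟩ else 0
  have hA_eq : A = ⋃ (v : Fin m → ZMod 2) (_ : extend v ∈ A), cyl m (extend v) := by
    refine subset_antisymm (fun y hy => ?_) (Set.iUnion₂_subset fun v hv => hA _ hv)
    have hy_mem : y ∈ cyl m (extend fun i => y i) := fun k hk => by simp [extend, hk]
    exact Set.mem_iUnion₂.2 ⟨fun i => y i, hA y hy (mem_cyl_comm.1 hy_mem), hy_mem⟩
  rw [hA_eq]
  exact .iUnion fun v => .iUnion fun _ => .basic _ ⟨m, _, rfl⟩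

lemma generateFrom_cylinders : MeasurableSpace.generateFrom cylinders = MeasurableSpace.pi := by
  refine le_antisymm (MeasurableSpace.generateFrom_le ?_) (iSup_le fun k => ?_)
  · rintro _ ⟨n, x, rfl⟩
    exact measurableSet_cyl n x
  · rintro _ ⟨s, -, rfl⟩
    exact measurableSet_generateFrom_cylinders_of_saturated (k + 1)
      fun y hy z hz => by simpa [hz k k.lt_succ_self] using hy

namespace IsHaar

lemma isProbabilityMeasure {μ : Measure WG} (hμ : IsHaar μ) : IsProbabilityMeasure μ :=
  ⟨by simpa [cyl_zero] using hμ 0 0⟩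

lemma isAddLeftInvariant {μ : Measure WG} (hμ : IsHaar μ) : μ.IsAddLeftInvariant := by
  have := isProbabilityMeasure hμ
  refine ⟨fun c => ext_of_generate_finite cylinders generateFrom_cylinders.symm
    isPiSystem_cylinders ?_ ?_⟩
  · rintro _ ⟨n, x, rfl⟩
    rw [Measure.map_apply (measurable_const_add c) (measurableSet_cyl n x),
      preimage_add_left_cyl, hμ, hμ]
  · rw [Measure.map_apply (measurable_const_add c) .univ, Set.preimage_univ]

end IsHaar

lemma rad_add (k : ℕ) (x y : WG) : rad k (x + y) = rad k x * rad k y := by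
  rw [rad, rad, rad, ← pow_add, Pi.add_apply, ZMod.val_add, ← neg_one_pow_eq_pow_mod_two]

lemma prod_range_testBit_eq {M : Type*} [CommMonoid M] (g : ℕ → M) {j a b : ℕ}
    (ha : j < 2 ^ a) (hb : j < 2 ^ b) :
    ∏ k ∈ range a, (if j.testBit k then g k else 1) =
      ∏ k ∈ range b, (if j.testBit k then g k else 1) := by
  wlog hab : a ≤ b generalizing a b
  · exact (this hb ha (le_of_not_ge hab)).symm
  refine prod_subset (range_subset_range.2 hab) fun k _ hk => ?_
  rw [Nat.testBit_lt_two_pow (ha.trans_le (Nat.pow_le_pow_right two_pos (by simpa using hk))),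
    if_neg Bool.false_ne_true]

lemma walsh_eq_prod_rad {j m : ℕ} (hj : j < 2 ^ m) (y : WG) :
    walsh j y = ∏ k ∈ range m, if j.testBit k then rad k y else 1 := by
  rw [prod_range_testBit_eq _ hj (Nat.lt_two_pow_self.trans_le
    (Nat.pow_le_pow_right two_pos j.le_succ)), walsh, ← prod_pow_eq_pow_sum]
  exact prod_congr rfl fun k _ => by split_ifs <;> rfl

lemma walsh_add (j : ℕ) (x y : WG) : walsh j (x + y) = walsh j x * walsh j y := by
  simp only [walsh_eq_prod_rad (Nat.lt_two_pow_self (n := j)), ← prod_mul_distrib]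
  exact prod_congr rfl fun k _ => by split_ifs <;> simp [rad_add]

lemma walsh_two_pow_add {n j : ℕ} (hj : j < 2 ^ n) (y : WG) :
    walsh (2 ^ n + j) y = rad n y * walsh j y := by
  have hlt : 2 ^ n + j < 2 ^ (n + 1) := by rw [pow_succ]; omega
  rw [walsh_eq_prod_rad hlt, walsh_eq_prod_rad hj, prod_range_succ, Nat.testBit_two_pow_add_eq,
    Nat.testBit_lt_two_pow hj, Bool.not_false, if_pos rfl, mul_comm]
  congr 1
  exact prod_congr rfl fun k hk => by rw [Nat.testBit_two_pow_add_gt (mem_range.1 hk)]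

lemma one_add_rad (k : ℕ) (y : WG) : 1 + rad k y = if y k = 0 then 2 else 0 := by
  rw [rad]
  split_ifs with hy
  · rw [hy, ZMod.val_zero]; norm_num
  · have hval : (y k).val = 1 := by
      have := (y k).val_lt
      have := (ZMod.val_eq_zero (y k)).not.2 hy
      omega
    rw [hval]; norm_num

lemma Dw_two_pow (n : ℕ) (y : WG) : Dw (2 ^ n) y = (In n).indicator (fun _ => 2 ^ n) y := by
  induction n with
  | zero => simp [Dw, In, cyl, walsh]
  | succ n ih =>
    have hDw : Dw (2 ^ (n + 1)) y = (1 + rad n y) * Dw (2 ^ n) y := by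
      rw [Dw, pow_succ, mul_two, sum_range_add, Dw, add_mul, one_mul, mul_sum]
      exact congrArg _ (sum_congr rfl fun j hj => walsh_two_pow_add (mem_range.1 hj) y)
    have hIn : In (n + 1) = In n ∩ {y | y n = 0} := by
      ext z
      exact Nat.forall_lt_succ_right
    rw [hDw, ih, hIn, one_add_rad]
    by_cases hy : y ∈ In n <;> by_cases hyn : y n = 0 <;> simp [hy, hyn, pow_succ, mul_comm]

lemma abs_walsh (j : ℕ) (y : WG) : |walsh j y| = 1 := by
  rw [walsh, abs_pow, abs_neg, abs_one, one_pow]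

lemma measurable_walsh (j : ℕ) : Measurable (walsh j) := by
  unfold walsh; fun_prop

lemma measurable_partialW (μ : Measure WG) (N : ℕ) (f : WG → ℝ) : Measurable (partialW μ N f) := by
  unfold partialW
  exact measurable_sum _ fun j _ => (measurable_walsh j).const_mul _

lemma partialW_two_pow {μ : Measure WG} {f : WG → ℝ} (hf : Integrable f μ) (n : ℕ) (x : WG) :
    partialW μ (2 ^ n) f x = 2 ^ n * ∫ t in cyl n x, f t ∂μ := by
  have hint (j : ℕ) : Integrable (fun t => f t * walsh j t * walsh j x) μ :=
    (hf.mul_bdd (measurable_walsh j).aestronglyMeasurable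
      (.of_forall fun t => (abs_walsh j t).le)).mul_const _
  have hkernel (t : WG) : ∑ j ∈ range (2 ^ n), f t * walsh j t * walsh j x =
      (cyl n x).indicator (fun t => 2 ^ n * f t) t := by
    simp_rw [mul_assoc, ← mul_sum, ← walsh_add]
    rw [← Dw, Dw_two_pow]
    by_cases ht : t ∈ cyl n x
    · simp [ht, add_mem_In_iff_mem_cyl.2 ht, mul_comm]
    · simp [ht, add_mem_In_iff_mem_cyl.not.2 ht]
  simp_rw [partialW, fhatW, ← integral_mul_const]
  rw [← integral_finsetSum _ fun j _ => hint j]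
  simp_rw [hkernel]
  rw [integral_indicator (measurableSet_cyl n x), integral_const_mul]

lemma partialW_two_pow_add_of_mem_In {μ : Measure WG} {f : WG → ℝ} (hf : Integrable f μ)
    {n : ℕ} {h : WG} (hh : h ∈ In n) (x : WG) :
    partialW μ (2 ^ n) f (x + h) = partialW μ (2 ^ n) f x := by
  rw [partialW_two_pow hf, partialW_two_pow hf, cyl_add_of_mem_In hh]

def uniformIn (μ : Measure WG) (n : ℕ) : Measure WG := (2 ^ n : ℝ≥0∞) • μ.restrict (In n)

lemma isProbabilityMeasure_uniformIn {μ : Measure WG} (hμ : IsHaar μ) (n : ℕ) :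
    IsProbabilityMeasure (uniformIn μ n) := by
  constructor
  rw [uniformIn, Measure.smul_apply, Measure.restrict_apply_univ, In, hμ, smul_eq_mul,
    ← mul_pow, ENNReal.mul_inv_cancel two_ne_zero ENNReal.ofNat_ne_top, one_pow]

lemma ae_mem_In_uniformIn (μ : Measure WG) (n : ℕ) : ∀ᵐ h ∂uniformIn μ n, h ∈ In n :=
  Measure.ae_smul_measure (ae_restrict_mem (measurableSet_cyl n 0)) _

lemma partialW_two_pow_eq_integral {μ : Measure WG} (hμ : IsHaar μ) {f : WG → ℝ}
    (hf : Integrable f μ) (n : ℕ) (x : WG) :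
    partialW μ (2 ^ n) f x = ∫ h, f (x + h) ∂uniformIn μ n := by
  have := IsHaar.isAddLeftInvariant hμ
  have hpre : (x + ·) ⁻¹' cyl n x = In n := by rw [preimage_add_left_cyl, sub_self]; rfl
  rw [partialW_two_pow hf, uniformIn, integral_smul_measure, ← hpre,
    (measurePreserving_add_left μ x).setIntegral_preimage_emb (measurableEmbedding_addLeft x)]
  simp

lemma sub_partialW_two_pow {μ : Measure WG} (hμ : IsHaar μ) {f : WG → ℝ}
    (hf : Integrable f μ) (n : ℕ) (x : WG) :
    f x - partialW μ (2 ^ n) f x = ∫ h, (f x - f (x + h)) ∂uniformIn μ n := by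
  have := IsHaar.isAddLeftInvariant hμ
  have := isProbabilityMeasure_uniformIn hμ n
  have hint : Integrable (fun h => f (x + h)) (uniformIn μ n) :=
    (hf.comp_add_left x).restrict.smul_measure (ENNReal.pow_ne_top ENNReal.ofNat_ne_top)
  rw [integral_sub (integrable_const _) hint, integral_const, probReal_univ, one_smul,
    partialW_two_pow_eq_integral hμ hf]

lemma omegaLp_le_two_mul_eLpNorm_sub {μ : Measure WG} [μ.IsAddLeftInvariant] {p : ℝ≥0∞}
    (hp : 1 ≤ p) {f S : WG → ℝ} (hf : AEStronglyMeasurable f μ) (hS : AEStronglyMeasurable S μ)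
    {n : ℕ} (hS_inv : ∀ h ∈ In n, ∀ x, S (x + h) = S x) :
    omegaLp μ p f n ≤ 2 * eLpNorm (f - S) p μ := by
  refine iSup₂_le fun h hh => ?_
  have hg := hf.sub hS
  have hgh : eLpNorm (fun x => (f - S) (x + h)) p μ = eLpNorm (f - S) p μ :=
    eLpNorm_comp_measurePreserving hg (measurePreserving_add_right μ h)
  calc eLpNorm (fun x => f (x + h) - f x) p μ
      = eLpNorm ((fun x => (f - S) (x + h)) - (f - S)) p μ := by
        congr 1
        ext x
        simp only [Pi.sub_apply, hS_inv h hh]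
        ring
    _ ≤ eLpNorm (fun x => (f - S) (x + h)) p μ + eLpNorm (f - S) p μ :=
        eLpNorm_sub_le (hg.comp_measurePreserving (measurePreserving_add_right μ h)) hg hp
    _ = 2 * eLpNorm (f - S) p μ := by rw [hgh, two_mul]

lemma eLpNorm_sub_partialW_le_omegaLp {μ : Measure WG} (hμ : IsHaar μ) {p : ℝ≥0∞}
    (hp : 1 ≤ p) (hp' : p ≠ ∞) {f : WG → ℝ} (hf : MemLp f p μ) (n : ℕ) :
    eLpNorm (fun x => f x - partialW μ (2 ^ n) f x) p μ ≤ omegaLp μ p f n := by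
  have := IsHaar.isProbabilityMeasure hμ
  have := IsHaar.isAddLeftInvariant hμ
  have := isProbabilityMeasure_uniformIn hμ n
  have hF : AEMeasurable (Function.uncurry fun x h => ‖f x - f (x + h)‖ₑ)
      (μ.prod (uniformIn μ n)) := by
    have hadd : Measure.QuasiMeasurePreserving (fun z : WG × WG => z.1 + z.2)
        (μ.prod (uniformIn μ n)) μ := by
      simpa only [add_comm] using quasiMeasurePreserving_add_swap μ (uniformIn μ n)
    have hfm := hf.1.aemeasurable
    exact ((hfm.comp_quasiMeasurePreserving Measure.quasiMeasurePreserving_fst).sub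
      (hfm.comp_quasiMeasurePreserving hadd)).enorm
  refine eLpNorm_le_of_enorm_le_lintegral hp hp' hF (fun x => ?_) ?_
  · rw [sub_partialW_two_pow hμ (hf.integrable hp)]
    exact enorm_integral_le_lintegral_enorm _
  · filter_upwards [ae_mem_In_uniformIn μ n] with h hh
    rw [eLpNorm_enorm]
    exact (eLpNorm_sub_comm f (f <| · + h) p μ).trans_le
      (le_iSup₂ (f := fun h (_ : h ∈ In n) => eLpNorm (fun x => f (x + h) - f x) p μ) h hh)

end Walsh

/-- Watari: `ω_p(1/2^n,f)/2 ≤ ‖f − S_{2^n}f‖_p ≤ ω_p(1/2^n,f)`. -/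
theorem watari_modulus (μ : Measure WG) (hμ : IsHaar μ) (p : ℝ≥0∞)
    (hp : 1 ≤ p) (hp' : p ≠ ∞) (f : WG → ℝ) (hf : MemLp f p μ) (n : ℕ) :
    omegaLp μ p f n / 2 ≤ eLpNorm (fun x => f x - partialW μ (2 ^ n) f x) p μ ∧
      eLpNorm (fun x => f x - partialW μ (2 ^ n) f x) p μ ≤ omegaLp μ p f n := by
  have := Walsh.IsHaar.isProbabilityMeasure hμ
  have := Walsh.IsHaar.isAddLeftInvariant hμ
  have hS_inv : ∀ h ∈ In n, ∀ x, partialW μ (2 ^ n) f (x + h) = partialW μ (2 ^ n) f x :=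
    fun _ hh => Walsh.partialW_two_pow_add_of_mem_In (hf.integrable hp) hh
  refine ⟨ENNReal.div_le_of_le_mul' ?_, Walsh.eLpNorm_sub_partialW_le_omegaLp hμ hp hp' hf n⟩
  exact Walsh.omegaLp_le_two_mul_eLpNorm_sub hp hf.1
    (Walsh.measurable_partialW μ _ f).aestronglyMeasurable hS_inv

end
end

section
/- (Watari) For f ∈ L_p(G) with 1 ≤ p < ∞ and n ∈ ℕ: ‖f − S_{2^n}f‖_p/2 ≤ E_{2^n}(f, L_p) ≤ ‖f − S_{2^n}f‖_p, where E_{2^n}(f, L_p) is the best approximation of f by Walsh polynomials of order less than 2^n. -/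
open MeasureTheory Filter Finset
open scoped ENNReal NNReal

noncomputable section

/-- Best approximation by Walsh polynomials of order `< N`. -/
noncomputable def bestApprox (μ : Measure WG) (p : ℝ≥0∞) (N : ℕ) (f : WG → ℝ) : ℝ≥0∞ :=
  ⨅ c : Fin N → ℝ, eLpNorm (fun x => f x - ∑ j : Fin N, c j * walsh j x) p μ


/-! The Dirichlet kernel `D_{2^n}` is `2^n` times the indicator of `I_n`, so `S_{2^n} f` averages
`f` over the dyadic intervals of rank `n`: it is the conditional expectation of `f` on the
σ-algebra they generate. Conditional expectation is an `L^p` contraction fixing every Walsh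
polynomial `ψ` of order `< 2^n`, hence `‖f - S_{2^n} f‖_p = ‖(f - ψ) - S_{2^n} (f - ψ)‖_p ≤
2 ‖f - ψ‖_p`. The upper bound holds because `S_{2^n} f` is itself such a polynomial. -/

section CondExp

variable {α E : Type*} {m m₀ : MeasurableSpace α} {μ : Measure α}
  [NormedAddCommGroup E] [NormedSpace ℝ E] [CompleteSpace E]

theorem eLpNorm_sub_condExp_le (hm : m ≤ m₀) [SigmaFinite (μ.trim hm)] {p : ℝ≥0∞} (hp : 1 ≤ p)
    {f ψ : α → E} (hf : Integrable f μ) (hψ : Integrable ψ μ) (hψm : StronglyMeasurable[m] ψ) :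
    eLpNorm (f - μ[f | m]) p μ ≤ 2 * eLpNorm (f - ψ) p μ := by
  have hsplit : f - μ[f | m] =ᵐ[μ] (f - ψ) - μ[f - ψ | m] := by
    filter_upwards [condExp_sub hf hψ m] with x hx
    simp only [Pi.sub_apply] at hx ⊢
    rw [hx, condExp_of_stronglyMeasurable hm hψm hψ]
    abel
  calc eLpNorm (f - μ[f | m]) p μ = eLpNorm ((f - ψ) - μ[f - ψ | m]) p μ := eLpNorm_congr_ae hsplit
    _ ≤ eLpNorm (f - ψ) p μ + eLpNorm (μ[f - ψ | m]) p μ :=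
      eLpNorm_sub_le (hf.sub hψ).aestronglyMeasurable
        integrable_condExp.aestronglyMeasurable hp
    _ ≤ eLpNorm (f - ψ) p μ + eLpNorm (f - ψ) p μ := by
      gcongr; exact eLpNorm_condExp_le_eLpNorm _ hp
    _ = 2 * eLpNorm (f - ψ) p μ := (two_mul _).symm

end CondExp

theorem measurableSet_cyl (m : ℕ) (a : WG) : MeasurableSet (cyl m a) := by
  have : cyl m a = ⋂ k ∈ range m, (fun y : WG => y k) ⁻¹' {a k} := by
    ext y; simp [cyl]
  rw [this]
  exact .biInter (range m).countable_toSet fun k _ =>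
    measurable_pi_apply k (.singleton (a k))

theorem isProbabilityMeasure_of_isHaar {μ : Measure WG} (hμ : IsHaar μ) :
    IsProbabilityMeasure μ :=
  ⟨by simpa [cyl] using hμ 0 0⟩

theorem measurable_walsh (j : ℕ) : Measurable (walsh j) := by
  unfold walsh
  refine (measurable_of_countable _).comp (Finset.measurable_sum _ fun k _ => ?_)
  split_ifs
  · exact (measurable_of_countable _).comp (measurable_pi_apply k)
  · exact measurable_const

theorem abs_walsh (j : ℕ) (x : WG) : |walsh j x| = 1 := by
  simp [walsh]

theorem integrable_walsh {μ : Measure WG} [IsFiniteMeasure μ] (j : ℕ) : Integrable (walsh j) μ :=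
  (integrable_const (1 : ℝ)).mono' (measurable_walsh j).aestronglyMeasurable
    (.of_forall fun x => (abs_walsh j x).le)

theorem integrable_mul_walsh {μ : Measure WG} {g : WG → ℝ} (hg : Integrable g μ) (j : ℕ) :
    Integrable (fun x => g x * walsh j x) μ :=
  hg.mul_bdd (measurable_walsh j).aestronglyMeasurable (.of_forall fun x => (abs_walsh j x).le)

theorem sum_range_testBit_eq {j a b : ℕ} (ha : j < 2 ^ a) (hb : j < 2 ^ b) (v : ℕ → ℕ) :
    ∑ k ∈ range a, (if j.testBit k then v k else 0) =
      ∑ k ∈ range b, (if j.testBit k then v k else 0) := by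
  wlog hab : a ≤ b generalizing a b
  · exact (this hb ha (le_of_not_ge hab)).symm
  refine Finset.sum_subset (range_subset_range.2 hab) fun k _ hk => ?_
  have hjk : j < 2 ^ k := ha.trans_le (Nat.pow_le_pow_right two_pos (by simpa using hk))
  simp [Nat.testBit_lt_two_pow hjk]

theorem walsh_eq_prod_rad {m j : ℕ} (hj : j < 2 ^ m) (x : WG) :
    walsh j x = ∏ k ∈ range m, if j.testBit k then rad k x else 1 := by
  rw [walsh, sum_range_testBit_eq (Nat.lt_two_pow_self.trans (Nat.pow_lt_pow_right one_lt_two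
    j.lt_succ_self)) hj, ← Finset.prod_pow_eq_pow_sum]
  exact Finset.prod_congr rfl fun k _ => by split_ifs <;> simp [rad]

theorem walsh_eq_of_mem_cyl {m j : ℕ} (hj : j < 2 ^ m) {y a : WG} (hy : y ∈ cyl m a) :
    walsh j y = walsh j a := by
  simp only [walsh_eq_prod_rad hj, rad]
  exact Finset.prod_congr rfl fun k hk => by rw [hy k (mem_range.1 hk)]

theorem sum_range_two_pow_prod_testBit (m : ℕ) (s : ℕ → ℝ) :
    ∑ j ∈ range (2 ^ m), ∏ k ∈ range m, (if j.testBit k then s k else 1) =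
      ∏ k ∈ range m, (1 + s k) := by
  induction m with
  | zero => simp
  | succ m ih =>
    have low : ∀ j ∈ range (2 ^ m), ∏ k ∈ range (m + 1), (if j.testBit k then s k else 1) =
        ∏ k ∈ range m, (if j.testBit k then s k else 1) := fun j hj => by
      simp [Finset.prod_range_succ, Nat.testBit_lt_two_pow (mem_range.1 hj)]
    have high : ∀ j ∈ range (2 ^ m),
        ∏ k ∈ range (m + 1), (if (2 ^ m + j).testBit k then s k else 1) =
          s m * ∏ k ∈ range m, (if j.testBit k then s k else 1) := fun j hj => by
      rw [Finset.prod_range_succ, Nat.testBit_two_pow_add_eq,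
        Nat.testBit_lt_two_pow (mem_range.1 hj), mul_comm]
      congr 1
      exact Finset.prod_congr rfl fun k hk => by
        rw [Nat.testBit_two_pow_add_gt (mem_range.1 hk)]
    rw [pow_succ, mul_two, Finset.sum_range_add, Finset.sum_congr rfl low,
      Finset.sum_congr rfl high, ← Finset.mul_sum, ih, Finset.prod_range_succ]
    ring

theorem rad_mul_rad (k : ℕ) (y a : WG) : rad k y * rad k a = if y k = a k then 1 else -1 := by
  unfold rad
  rw [← pow_add]
  by_cases h : y k = a k
  · rw [if_pos h, h, ← two_mul, pow_mul]
    norm_num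
  · have hy := ZMod.val_lt (y k)
    have ha := ZMod.val_lt (a k)
    have hval : (y k).val ≠ (a k).val := fun e => h (ZMod.val_injective 2 e)
    rw [if_neg h, show (y k).val + (a k).val = 1 by omega, pow_one]

theorem sum_walsh_mul_walsh (m : ℕ) (y a : WG) :
    ∑ j ∈ range (2 ^ m), walsh j y * walsh j a = (cyl m a).indicator (fun _ => 2 ^ m) y := by
  have hprod : ∀ j ∈ range (2 ^ m), walsh j y * walsh j a =
      ∏ k ∈ range m, if j.testBit k then rad k y * rad k a else 1 := fun j hj => by
    rw [walsh_eq_prod_rad (mem_range.1 hj), walsh_eq_prod_rad (mem_range.1 hj),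
      ← Finset.prod_mul_distrib]
    exact Finset.prod_congr rfl fun k _ => by split_ifs <;> simp
  rw [Finset.sum_congr rfl hprod, sum_range_two_pow_prod_testBit]
  by_cases hy : y ∈ cyl m a
  · rw [Set.indicator_of_mem hy, Finset.prod_congr rfl fun k hk => by
      rw [rad_mul_rad, if_pos (hy k (mem_range.1 hk))], Finset.prod_const, card_range]
    norm_num
  · obtain ⟨k, hk, hne⟩ : ∃ k < m, y k ≠ a k := by simpa [cyl] using hy
    rw [Set.indicator_of_notMem hy]
    exact Finset.prod_eq_zero (mem_range.2 hk) (by rw [rad_mul_rad, if_neg hne]; norm_num)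

theorem partialW_two_pow_eq_setIntegral {μ : Measure WG} {g : WG → ℝ} (hg : Integrable g μ)
    (m : ℕ) (a : WG) : partialW μ (2 ^ m) g a = 2 ^ m * ∫ y in cyl m a, g y ∂μ := by
  have hpt : ∀ y, ∑ j ∈ range (2 ^ m), g y * walsh j y * walsh j a =
      (cyl m a).indicator (fun y => 2 ^ m * g y) y := fun y => by
    simp_rw [mul_assoc]
    rw [← Finset.mul_sum, sum_walsh_mul_walsh]
    by_cases hy : y ∈ cyl m a <;> simp [hy, mul_comm]
  simp_rw [partialW, fhatW, ← integral_mul_const]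
  rw [← integral_finsetSum _ fun j _ => (integrable_mul_walsh hg j).mul_const _,
    integral_congr_ae (.of_forall hpt), integral_indicator (measurableSet_cyl m a),
    integral_const_mul]

theorem partialW_two_pow_eq_self {μ : Measure WG} (hμ : IsHaar μ) {m : ℕ} {ψ : WG → ℝ}
    (hψ : Integrable ψ μ) (hconst : ∀ a, ∀ y ∈ cyl m a, ψ y = ψ a) :
    partialW μ (2 ^ m) ψ = ψ := by
  ext a
  rw [partialW_two_pow_eq_setIntegral hψ, setIntegral_congr_fun (measurableSet_cyl m a)
    (hconst a), setIntegral_const, measureReal_def, hμ, smul_eq_mul, ← mul_assoc,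
    ENNReal.toReal_pow, ENNReal.toReal_inv, ← mul_pow]
  norm_num

theorem integrable_partialW (μ : Measure WG) [IsFiniteMeasure μ] (N : ℕ) (g : WG → ℝ) :
    Integrable (partialW μ N g) μ :=
  integrable_finsetSum _ fun j _ => (integrable_walsh j).const_mul _

theorem integral_mul_partialW {μ : Measure WG} {h : WG → ℝ} (hh : Integrable h μ)
    (N : ℕ) (g : WG → ℝ) :
    ∫ x, h x * partialW μ N g x ∂μ = ∑ j ∈ range N, fhatW μ g j * fhatW μ h j := by
  have hterm : ∀ j, (fun x => h x * (fhatW μ g j * walsh j x)) =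
      fun x => fhatW μ g j * (h x * walsh j x) := fun j => by ext; ring
  simp_rw [partialW, Finset.mul_sum]
  rw [integral_finsetSum _ fun j _ => by rw [hterm]; exact (integrable_mul_walsh hh j).const_mul _]
  exact Finset.sum_congr rfl fun j _ => by rw [hterm, integral_const_mul]; rfl

/-- The σ-algebra generated by the dyadic intervals `I_m(x)`. -/
abbrev dyadicSigma (m : ℕ) : MeasurableSpace WG :=
  MeasurableSpace.comap (range m).restrict inferInstance

theorem dyadicSigma_le (m : ℕ) : dyadicSigma m ≤ MeasurableSpace.pi :=
  (range m).measurable_restrict.comap_le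

theorem restrict_range_eq_iff_mem_cyl {m : ℕ} {y a : WG} :
    (range m).restrict y = (range m).restrict a ↔ y ∈ cyl m a := by
  simp [funext_iff, cyl]

theorem measurable_dyadicSigma_iff {β : Type*} [MeasurableSpace β] [MeasurableSingletonClass β]
    {m : ℕ} {g : WG → β} : Measurable[dyadicSigma m] g ↔ ∀ a, ∀ y ∈ cyl m a, g y = g a := by
  constructor
  · intro hg a y hy
    obtain ⟨T, -, hT⟩ := hg (measurableSet_singleton (g a))
    have ha : (range m).restrict a ∈ T := (Set.ext_iff.1 hT a).2 rfl
    rw [← restrict_range_eq_iff_mem_cyl.2 hy] at ha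
    exact (Set.ext_iff.1 hT y).1 ha
  · intro hconst T _
    refine ⟨(range m).restrict '' (g ⁻¹' T), (Set.toFinite _).measurableSet, ?_⟩
    ext y
    constructor
    · rintro ⟨a, ha, hay⟩
      rwa [Set.mem_preimage, hconst a y (restrict_range_eq_iff_mem_cyl.1 hay.symm)]
    · exact fun hy => ⟨y, hy, rfl⟩

theorem measurable_dyadicSigma_walsh {m j : ℕ} (hj : j < 2 ^ m) :
    Measurable[dyadicSigma m] (walsh j) :=
  measurable_dyadicSigma_iff.2 fun _ _ hy => walsh_eq_of_mem_cyl hj hy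

theorem partialW_two_pow_ae_eq_condExp {μ : Measure WG} (hμ : IsHaar μ) {f : WG → ℝ}
    (hf : Integrable f μ) (m : ℕ) :
    partialW μ (2 ^ m) f =ᵐ[μ] μ[f | dyadicSigma m] := by
  have := isProbabilityMeasure_of_isHaar hμ
  refine ae_eq_condExp_of_forall_setIntegral_eq (dyadicSigma_le m) hf
    (fun s _ _ => (integrable_partialW μ _ f).integrableOn) (fun s hs _ => ?_)
    (Measurable.aestronglyMeasurable (Finset.measurable_sum _ fun j hj =>
      (measurable_dyadicSigma_walsh (mem_range.1 hj)).const_mul _))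
  have hs₀ := dyadicSigma_le m s hs
  have hind : Integrable (s.indicator (1 : WG → ℝ)) μ := (integrable_const 1).indicator hs₀
  have hreprod : partialW μ (2 ^ m) (s.indicator 1) = s.indicator 1 :=
    partialW_two_pow_eq_self hμ hind (measurable_dyadicSigma_iff.1 (measurable_const.indicator hs))
  calc ∫ x in s, partialW μ (2 ^ m) f x ∂μ
      = ∫ x, s.indicator 1 x * partialW μ (2 ^ m) f x ∂μ := by
        simp_rw [← Set.indicator_mul_left, Pi.one_apply, one_mul]
        exact (integral_indicator hs₀).symm
    _ = ∫ x, f x * partialW μ (2 ^ m) (s.indicator 1) x ∂μ := by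
        rw [integral_mul_partialW hind, integral_mul_partialW hf]
        exact Finset.sum_congr rfl fun j _ => mul_comm _ _
    _ = ∫ x in s, f x ∂μ := by
        rw [hreprod, ← integral_indicator hs₀]
        simp_rw [← Set.indicator_mul_right, Pi.one_apply, mul_one]

theorem watari_best_approx_general (μ : Measure WG) (hμ : IsHaar μ) (p : ℝ≥0∞)
    (hp : 1 ≤ p) (f : WG → ℝ) (hf : MemLp f p μ) (n : ℕ) :
    eLpNorm (fun x => f x - partialW μ (2 ^ n) f x) p μ / 2 ≤ bestApprox μ p (2 ^ n) f ∧
      bestApprox μ p (2 ^ n) f ≤ eLpNorm (fun x => f x - partialW μ (2 ^ n) f x) p μ := by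
  have := isProbabilityMeasure_of_isHaar hμ
  have hfi : Integrable f μ := hf.integrable hp
  constructor
  · refine le_iInf fun c => ?_
    let ψ : WG → ℝ := fun x => ∑ j : Fin (2 ^ n), c j * walsh j x
    have hψ : Integrable ψ μ := integrable_finsetSum _ fun j _ => (integrable_walsh _).const_mul _
    have hψm : Measurable[dyadicSigma n] ψ :=
      Finset.measurable_sum _ fun j _ => (measurable_dyadicSigma_walsh j.isLt).const_mul _
    have hS : (fun x => f x - partialW μ (2 ^ n) f x) =ᵐ[μ] f - μ[f | dyadicSigma n] :=
      EventuallyEq.sub .rfl (partialW_two_pow_ae_eq_condExp hμ hfi n)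
    rw [ENNReal.div_le_iff_le_mul (.inl two_ne_zero) (.inl ENNReal.ofNat_ne_top), mul_comm,
      eLpNorm_congr_ae hS]
    exact eLpNorm_sub_condExp_le (dyadicSigma_le n) hp hfi hψ hψm.stronglyMeasurable
  · refine iInf_le_of_le (fun j => fhatW μ f j) (le_of_eq ?_)
    congr with x
    rw [Fin.sum_univ_eq_sum_range (fun j => fhatW μ f j * walsh j x)]
    rfl

/-- Watari: `‖f − S_{2^n}f‖_p/2 ≤ E_{2^n}(f,L_p) ≤ ‖f − S_{2^n}f‖_p`. -/
theorem watari_best_approx (μ : Measure WG) (hμ : IsHaar μ) (p : ℝ≥0∞)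
    (hp : 1 ≤ p) (hp' : p ≠ ∞) (f : WG → ℝ) (hf : MemLp f p μ) (n : ℕ) :
    eLpNorm (fun x => f x - partialW μ (2 ^ n) f x) p μ / 2 ≤ bestApprox μ p (2 ^ n) f ∧
      bestApprox μ p (2 ^ n) f ≤ eLpNorm (fun x => f x - partialW μ (2 ^ n) f x) p μ :=
  watari_best_approx_general μ hμ p hp f hf n

end
end
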